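/- Let S be a Stallings section for an m-epi π : Ã* → G, let H be a finitely generated subgroup of G, and let A be a finite inverse Ã-automaton with basepoint q₀ such that S_H ⊆ L(A) ⊆ Hπ⁻¹. Let p and q be states of A, let u and v be words labelling paths q₀ → p and q₀ → q respectively, and let s ∈ S_{(uv⁻¹)π}. Then there exists a path from p to q in A labelled by a word w with wπ = 1 if and only if s ∈ L(A). -/

import Mathlib

/-!  Common framework: words over an involutive alphabet Ã = A ∪ A⁻¹ (modelled as
`α × Bool`), free reduction, matched epimorphisms, Stallings sections and
Ã-automata, following Silva–Soler-Escrivà–Ventura. -/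

/-- A word over the involutive alphabet Ã = A ∪ A⁻¹: the letter `(a, tt)` denotes
`a` and `(a, ff)` denotes `a⁻¹` (the `FreeGroup` convention). -/
abbrev Word (α : Type) : Type := List (α × Bool)

namespace Stallings

instance {β : Type} : HasSubset (Language β) := ⟨fun L M => ∀ w ∈ L, w ∈ M⟩
instance {β : Type} : Union (Language β) := ⟨fun L M => {w | w ∈ L ∨ w ∈ M}⟩
instance {β : Type} : Inter (Language β) := ⟨fun L M => {w | w ∈ L ∧ w ∈ M}⟩
instance {β : Type} : EmptyCollection (Language β) := ⟨(∅ : Set (List β))⟩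

variable {α : Type} {G : Type} [Group G]

/-- The formal inverse of a letter of Ã. -/
def letterInv (x : α × Bool) : α × Bool := (x.1, !x.2)

/-- The formal inverse `w⁻¹` of a word over Ã. -/
def wordInv (w : Word α) : Word α := (w.map letterInv).reverse

/-- The free reduction `w̄` of a word over Ã (iterated deletion of factors `a a⁻¹`). -/
noncomputable def redW (w : Word α) : Word α :=
  letI := Classical.decEq α
  FreeGroup.reduce w

/-- The reduction `L̄` of a language over Ã. -/
noncomputable def red (L : Language (α × Bool)) : Language (α × Bool) :=
  redW '' L

/-- The set `R_A` of reduced words over Ã. -/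
noncomputable def Reduced : Language (α × Bool) := {w | redW w = w}

/-- Evaluation of a monoid homomorphism `π : Ã* → G` at a word. -/
def ev (π : FreeMonoid (α × Bool) →* G) (w : Word α) : G :=
  π (FreeMonoid.ofList w)

/-- The image of a language under (evaluation of) `π`. -/
def evImg (π : FreeMonoid (α × Bool) →* G) (L : Language (α × Bool)) : Set G :=
  {g | ∃ w ∈ L, ev π w = g}

/-- A matched epimorphism (m-epi) `π : Ã* → G`: a surjective monoid homomorphism
sending formal inverses to inverses. -/
structure IsMEpi (π : FreeMonoid (α × Bool) →* G) : Prop where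
  surjective : Function.Surjective π
  matched : ∀ (a : α) (b : Bool),
    π (FreeMonoid.of (a, !b)) = (π (FreeMonoid.of (a, b)))⁻¹

/-- `S_X = Xπ⁻¹ ∩ S`, for `X ⊆ G`. -/
def sub (S : Language (α × Bool)) (π : FreeMonoid (α × Bool) →* G) (X : Set G) :
    Language (α × Bool) :=
  {w ∈ S | ev π w ∈ X}

/-- A Stallings section for an m-epi `π : Ã* → G`: a regular section `S ⊆ R_A`
such that each `S_g` is regular (S1), and `S_{gh} ⊆ (S_g S_h)‾` (S2). -/
structure IsStallingsSection (π : FreeMonoid (α × Bool) →* G)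
    (S : Language (α × Bool)) : Prop where
  regular : S.IsRegular
  reduced : S ⊆ Reduced
  inv_mem : ∀ w ∈ S, wordInv w ∈ S
  exists_rep : ∀ g : G, ∃ w ∈ S, ev π w = g
  s1 : ∀ g : G, (sub S π {g}).IsRegular
  s2 : ∀ g h : G, sub S π {g * h} ⊆ red (sub S π {g} * sub S π {h})

/-- A group has a Stallings section if some m-epi onto it (from the free monoid on
an involutive finite alphabet) admits a Stallings section. -/
def HasStallingsSection (G : Type) [Group G] : Prop :=
  ∃ (α : Type) (π : FreeMonoid (α × Bool) →* G) (S : Language (α × Bool)),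
    Finite α ∧ IsMEpi π ∧ IsStallingsSection π S

/-- `Pref L`: the set of prefixes of words of `L`. -/
def Pref (L : Language (α × Bool)) : Language (α × Bool) :=
  {u | ∃ v, u ++ v ∈ L}

/-- An extendable Stallings section: every `u ∈ S` admits a reduced word `v` with
`u vⁿ ∈ S` for all `n` and `u ∈ Pref (S_{(u vⁿ u⁻¹)π})` for almost all `n`. -/
def Extendable (π : FreeMonoid (α × Bool) →* G) (S : Language (α × Bool)) : Prop :=
  ∀ u ∈ S, ∃ v : Word α, v ∈ Reduced ∧
    (∀ n : ℕ, u ++ (List.replicate n v).flatten ∈ S) ∧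
    ∃ N : ℕ, ∀ n ≥ N, u ∈ Pref (sub S π {ev π u * (ev π v) ^ n * (ev π u)⁻¹})

/-- An Ã-automaton with state type `Q`, initial state `start`, terminal states
`accept` and edge set `edges`. -/
structure Automaton (β : Type) (Q : Type) where
  start : Q
  accept : Set Q
  edges : Set (Q × β × Q)

namespace Automaton

variable {β Q : Type}

/-- `M.Path p w q`: there is a path from `p` to `q` labelled `w`. -/
inductive Path (M : Automaton β Q) : Q → List β → Q → Prop
  | nil (q : Q) : Path M q [] q
  | cons {p q r : Q} {a : β} {w : List β} :
      (p, a, q) ∈ M.edges → Path M q w r → Path M p (a :: w) r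

/-- The language recognized by an automaton. -/
def lang (M : Automaton β Q) : Language β :=
  {w | ∃ t ∈ M.accept, M.Path M.start w t}

/-- A trim automaton: every state lies on some successful path. -/
def Trim (M : Automaton β Q) : Prop :=
  ∀ q : Q, ∃ (u v : List β) (t : Q), t ∈ M.accept ∧ M.Path M.start u q ∧ M.Path q v t

/-- An involutive Ã-automaton. -/
def Involutive {α : Type} (M : Automaton (α × Bool) Q) : Prop :=
  ∀ p a q, (p, a, q) ∈ M.edges → (q, letterInv a, p) ∈ M.edges

/-- A deterministic automaton. -/
def Deterministic (M : Automaton β Q) : Prop :=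
  ∀ p a q q', (p, a, q) ∈ M.edges → (p, a, q') ∈ M.edges → q = q'

/-- An inverse automaton: involutive, deterministic, trim, with a single
terminal state. -/
def IsInverse {α : Type} (M : Automaton (α × Bool) Q) : Prop :=
  M.Involutive ∧ M.Deterministic ∧ M.Trim ∧ ∃ t : Q, M.accept = {t}

/-- The automaton obtained by identifying the states `p` and `q` (the quotient is
realized on the same state type, redirecting `q` to `p`). -/
def merge [DecidableEq Q] (M : Automaton β Q) (p q : Q) : Automaton β Q :=
  let f : Q → Q := fun x => if x = q then p else x
  { start := f M.start
    accept := f '' M.accept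
    edges := {e | ∃ e' ∈ M.edges, e = (f e'.1, e'.2.1, f e'.2.2)} }

end Automaton

end Stallings

/-!
If `w` labels a path `p → q`, then `u w v⁻¹` labels a loop at the basepoint, so it lies in
`L(A) ⊆ Hπ⁻¹`; when `wπ = 1` it has the same image as `s`, whence `s ∈ S_H ⊆ L(A)`.
Conversely, if `s ∈ L(A)` then `s` labels a loop at the basepoint and `u⁻¹ s v` labels a path
`p → q` whose image is `(uπ)⁻¹ (uπ)(vπ)⁻¹ (vπ) = 1`.
-/

namespace Stallings

variable {α G Q : Type} [Group G]

theorem ev_append (π : FreeMonoid (α × Bool) →* G) (a b : Word α) :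
    ev π (a ++ b) = ev π a * ev π b :=
  map_mul π (FreeMonoid.ofList a) (FreeMonoid.ofList b)

theorem wordInv_cons (x : α × Bool) (w : Word α) :
    wordInv (x :: w) = wordInv w ++ [letterInv x] := by
  simp [wordInv]

theorem ev_wordInv (π : FreeMonoid (α × Bool) →* G)
    (hπ : ∀ (a : α) (b : Bool), π (FreeMonoid.of (a, !b)) = (π (FreeMonoid.of (a, b)))⁻¹)
    (w : Word α) : ev π (wordInv w) = (ev π w)⁻¹ := by
  induction w with
  | nil => simp [wordInv, ev]
  | cons x w ih =>
    have hx : ev π [letterInv x] = (ev π [x])⁻¹ := hπ x.1 x.2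
    rw [wordInv_cons, ev_append, ih, hx, ← mul_inv_rev, ← ev_append]
    rfl

namespace Automaton

theorem Path.append {β : Type} {M : Automaton β Q} {a b c : Q} {w₁ w₂ : List β}
    (h₁ : M.Path a w₁ b) (h₂ : M.Path b w₂ c) : M.Path a (w₁ ++ w₂) c := by
  induction h₁ with
  | nil => exact h₂
  | cons he _ ih => exact .cons he (ih h₂)

theorem Path.wordInv {M : Automaton (α × Bool) Q} (hM : M.Involutive) {a b : Q} {w : Word α}
    (h : M.Path a w b) : M.Path b (Stallings.wordInv w) a := by
  induction h with
  | nil q => exact .nil q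
  | @cons p _ _ x _ he _ ih =>
    rw [wordInv_cons]
    exact ih.append (.cons (hM _ _ _ he) (.nil p))

theorem mem_lang_iff_path_start {β : Type} {M : Automaton β Q} (hbase : M.accept = {M.start})
    {w : List β} : w ∈ M.lang ↔ M.Path M.start w M.start := by
  show (∃ t ∈ M.accept, M.Path M.start w t) ↔ _
  simp [hbase]

end Automaton

end Stallings

open Stallings in
theorem exists_kernel_path_iff_mem_lang_general {α G Q : Type} [Group G]
    (π : FreeMonoid (α × Bool) →* G) (hπ : IsMEpi π)
    (S : Language (α × Bool))
    (H : Subgroup G)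
    (M : Automaton (α × Bool) Q) (hM : M.IsInverse) (hbase : M.accept = {M.start})
    (h1 : sub S π ↑H ⊆ M.lang) (h2 : ∀ w ∈ M.lang, ev π w ∈ H)
    (p q : Q) (u v : Word α) (hu : M.Path M.start u p) (hv : M.Path M.start v q)
    (s : Word α) (hs : s ∈ sub S π {ev π u * (ev π v)⁻¹}) :
    (∃ w : Word α, M.Path p w q ∧ ev π w = 1) ↔ s ∈ M.lang := by
  obtain ⟨hsS, hsev : ev π s = ev π u * (ev π v)⁻¹⟩ := hs
  have hinv := ev_wordInv π hπ.matched
  constructor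
  · rintro ⟨w, hw, hw1⟩
    have hloop : u ++ (w ++ wordInv v) ∈ M.lang :=
      (Automaton.mem_lang_iff_path_start hbase).2 (hu.append (hw.append (hv.wordInv hM.1)))
    have hval : ev π (u ++ (w ++ wordInv v)) = ev π s := by
      rw [ev_append, ev_append, hw1, hinv, hsev, one_mul]
    exact h1 s ⟨hsS, hval ▸ h2 _ hloop⟩
  · intro hsL
    have hloop := (Automaton.mem_lang_iff_path_start hbase).1 hsL
    refine ⟨wordInv u ++ (s ++ v), (hu.wordInv hM.1).append (hloop.append hv), ?_⟩
    rw [ev_append, ev_append, hinv, hsev]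
    group

open Stallings in
/-- Let `S` be a Stallings section for the m-epi `π`, `H` a f.g.
subgroup of `G`, and `M` a finite inverse Ã-automaton with basepoint such that
`S_H ⊆ L(M) ⊆ Hπ⁻¹`. If `u, v` label paths from the basepoint to states `p, q`
respectively, and `s ∈ S_{(uv⁻¹)π}`, then there is a path `p → q` labelled by a
word in `1π⁻¹` if and only if `s ∈ L(M)`. -/
theorem exists_kernel_path_iff_mem_lang {α G Q : Type} [Finite α] [Group G]
    [Fintype Q] (π : FreeMonoid (α × Bool) →* G) (hπ : IsMEpi π)
    (S : Language (α × Bool)) (hS : IsStallingsSection π S)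
    (H : Subgroup G) (hH : H.FG)
    (M : Automaton (α × Bool) Q) (hM : M.IsInverse) (hbase : M.accept = {M.start})
    (h1 : sub S π ↑H ⊆ M.lang) (h2 : ∀ w ∈ M.lang, ev π w ∈ H)
    (p q : Q) (u v : Word α) (hu : M.Path M.start u p) (hv : M.Path M.start v q)
    (s : Word α) (hs : s ∈ sub S π {ev π u * (ev π v)⁻¹}) :
    (∃ w : Word α, M.Path p w q ∧ ev π w = 1) ↔ s ∈ M.lang :=
  exists_kernel_path_iff_mem_lang_general π hπ S H M hM hbase h1 h2 p q u v hu hv s hs
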